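/- Let S be a p×p positive definite real symmetric matrix and c ∈ ℝ. Then the set {Σ positive definite : log det(S Σ⁻¹) - tr(S Σ⁻¹) + p ≥ c} is a compact subset of the space of symmetric p×p matrices. -/

import Mathlib

/-!
Substitute `P = Sig⁻¹` and `M = √S * P * √S`. Then `det (S * P) = det M` and
`tr (S * P) = tr M`, so the functional is `∑ᵢ (log μᵢ - μᵢ + 1)` over the eigenvalues `μᵢ` of
`M`. Every summand is `≤ 0`, so each one is `≥ c`, which confines every `μᵢ` to
`[exp (c - 1), 2 (1 - c)]`. Hence `P` lies in the Loewner interval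
`[exp (c - 1) • S⁻¹, 2 (1 - c) • S⁻¹]`, a compact set of positive definite matrices on which the
functional is continuous. The superlevel set in `P` is therefore compact, and the set of the
theorem is its image under the continuous map `P ↦ P⁻¹`.
-/

open Matrix

namespace Real

lemma exp_sub_one_le_of_le_log_sub_add_one {x c : ℝ} (hx : 0 < x) (h : c ≤ log x - x + 1) :
    exp (c - 1) ≤ x := by
  rw [← exp_log hx]
  exact exp_le_exp.2 (by linarith)

lemma le_two_mul_one_sub_of_le_log_sub_add_one {x c : ℝ} (hx : 0 < x) (h : c ≤ log x - x + 1) :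
    x ≤ 2 * (1 - c) := by
  have hlog_half : log (x / 2) ≤ x / 2 - 1 := log_le_sub_one_of_pos (by positivity)
  rw [log_div hx.ne' two_ne_zero] at hlog_half
  linarith [log_two_lt_d9]

end Real

lemma IsSelfAdjoint.conjugate_le_conjugate_iff {R : Type*} [Ring R] [PartialOrder R] [StarRing R]
    [StarOrderedRing R] {a b c : R} (hc : IsSelfAdjoint c) (hu : IsUnit c) :
    c * a * c ≤ c * b * c ↔ a ≤ b := by
  rw [← sub_nonneg, ← sub_nonneg (a := b), ← sub_mul, ← mul_sub]
  simpa [hc.star_eq] using hu.star_left_conjugate_nonneg_iff (x := b - a)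

namespace Matrix

open scoped MatrixOrder

variable {n : Type*} [Fintype n]

lemma isClosed_setOf_posSemidef : IsClosed {A : Matrix n n ℝ | A.PosSemidef} := by
  simp only [posSemidef_iff_dotProduct_mulVec, Set.ofPred_and, Set.ofPred_forall]
  exact (isClosed_eq continuous_id.matrix_conjTranspose continuous_id).inter <|
    isClosed_iInter fun x => isClosed_le continuous_const <| by fun_prop

instance : OrderClosedTopology (Matrix n n ℝ) where
  isClosed_le' := isClosed_le_of_isClosed_nonneg <| by
    simpa only [nonneg_iff_posSemidef] using isClosed_setOf_posSemidef

lemma PosSemidef.two_mul_abs_apply_le {A : Matrix n n ℝ} (hA : A.PosSemidef) (i j : n) :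
    2 * |A i j| ≤ A i i + A j j := by
  classical
  have hform (s : ℝ) : 0 ≤ A i i + 2 * s * A i j + s ^ 2 * A j j := by
    have := hA.dotProduct_mulVec_nonneg (Pi.single i 1 + s • Pi.single j 1)
    have hji : A j i = A i j := hA.1.apply i j
    simp [mulVec_add, dotProduct_add, add_dotProduct, mulVec_smul, mulVec_single, hji] at this
    linarith
  rcases abs_cases (A i j) with ⟨h, -⟩ | ⟨h, -⟩ <;> rw [h] <;>
    linarith [hform 1, hform (-1)]

lemma PosSemidef.abs_apply_le_trace {A : Matrix n n ℝ} (hA : A.PosSemidef) (i j : n) :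
    |A i j| ≤ A.trace := by
  have hdiag (k : n) : A k k ≤ A.trace :=
    Finset.single_le_sum (f := A.diag) (fun l _ => hA.diag_nonneg) (Finset.mem_univ k)
  linarith [hA.two_mul_abs_apply_le i j, hdiag i, hdiag j]

instance : CompactIccSpace (Matrix n n ℝ) where
  isCompact_Icc {A B} := by
    -- taken before the entrywise norm is installed, whose topology is the product topology
    -- only up to unfolding, so that `OrderClosedTopology` is still found
    have hclosed : IsClosed (Set.Icc A B) := isClosed_Icc
    let : NormedAddCommGroup (Matrix n n ℝ) := Matrix.normedAddCommGroup
    let : NormedSpace ℝ (Matrix n n ℝ) := Matrix.normedSpace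
    refine Metric.isCompact_of_isClosed_isBounded hclosed <|
      (Metric.isBounded_closedBall (x := A) (r := (B - A).trace)).subset fun P ⟨hAP, hPB⟩ => ?_
    have hPA : (P - A).PosSemidef := hAP
    have htrace : (P - A).trace ≤ (B - A).trace := by
      linarith [PosSemidef.trace_nonneg (A := B - P) hPB, trace_sub B P, trace_sub P A,
        trace_sub B A]
    rw [Metric.mem_closedBall, dist_eq_norm, norm_le_iff (hPA.trace_nonneg.trans htrace)]
    exact fun i j => (hPA.abs_apply_le_trace i j).trans htrace

variable [DecidableEq n]

lemma IsHermitian.smul_one_le {A : Matrix n n ℝ} (hA : A.IsHermitian) {a : ℝ}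
    (h : ∀ i, a ≤ hA.eigenvalues i) : a • (1 : Matrix n n ℝ) ≤ A := by
  rw [← Algebra.algebraMap_eq_smul_one]
  refine algebraMap_le_of_le_spectrum (fun x hx => ?_) hA.isSelfAdjoint
  obtain ⟨i, rfl⟩ := hA.spectrum_real_eq_range_eigenvalues ▸ hx
  exact h i

lemma IsHermitian.le_smul_one {A : Matrix n n ℝ} (hA : A.IsHermitian) {b : ℝ}
    (h : ∀ i, hA.eigenvalues i ≤ b) : A ≤ b • (1 : Matrix n n ℝ) := by
  rw [← Algebra.algebraMap_eq_smul_one]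
  refine le_algebraMap_of_spectrum_le (fun x hx => ?_) hA.isSelfAdjoint
  obtain ⟨i, rfl⟩ := hA.spectrum_real_eq_range_eigenvalues ▸ hx
  exact h i

lemma PosDef.log_det_sub_trace_add_card {A : Matrix n n ℝ} (hA : A.PosDef) :
    Real.log A.det - A.trace + Fintype.card n =
      ∑ i, (Real.log (hA.1.eigenvalues i) - hA.1.eigenvalues i + 1) := by
  have hdet : A.det = ∏ i, hA.1.eigenvalues i := by
    simpa using hA.1.det_eq_prod_eigenvalues
  have htrace : A.trace = ∑ i, hA.1.eigenvalues i := by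
    simpa using hA.1.trace_eq_sum_eigenvalues
  rw [hdet, htrace, Real.log_prod (fun i _ => (hA.eigenvalues_pos i).ne'),
    Finset.sum_add_distrib, Finset.sum_sub_distrib]
  simp

lemma PosDef.mem_Icc_of_le_log_det_sub_trace {A : Matrix n n ℝ} (hA : A.PosDef) {c : ℝ}
    (h : c ≤ Real.log A.det - A.trace + Fintype.card n) :
    A ∈ Set.Icc (Real.exp (c - 1) • 1) ((2 * (1 - c)) • 1) := by
  rw [hA.log_det_sub_trace_add_card] at h
  -- every summand is `≤ 0` because `log x ≤ x - 1`
  have hterm i : c ≤ Real.log (hA.1.eigenvalues i) - hA.1.eigenvalues i + 1 := by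
    refine h.trans <| (Finset.sum_le_sum_of_subset_of_nonpos' (Finset.subset_univ {i})
      fun j _ _ => ?_).trans_eq (Finset.sum_singleton _ i)
    linarith [Real.log_le_sub_one_of_pos (hA.eigenvalues_pos j)]
  exact ⟨hA.1.smul_one_le fun i =>
      Real.exp_sub_one_le_of_le_log_sub_add_one (hA.eigenvalues_pos i) (hterm i),
    hA.1.le_smul_one fun i =>
      Real.le_two_mul_one_sub_of_le_log_sub_add_one (hA.eigenvalues_pos i) (hterm i)⟩

lemma PosDef.mem_Icc_of_le_log_det_mul_sub_trace {S P : Matrix n n ℝ} (hS : S.PosDef)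
    (hP : P.PosDef) {c : ℝ} (h : c ≤ Real.log (S * P).det - (S * P).trace + Fintype.card n) :
    P ∈ Set.Icc (Real.exp (c - 1) • S⁻¹) ((2 * (1 - c)) • S⁻¹) := by
  set R := CFC.sqrt S
  have hRR : R * R = S := CFC.sqrt_mul_sqrt_self S hS.posSemidef.nonneg
  have hR : IsSelfAdjoint R := .of_nonneg (CFC.sqrt_nonneg S)
  have hRu : IsUnit R := (CFC.isUnit_sqrt_iff S hS.posSemidef.nonneg).2 hS.isUnit
  have hM : (R * P * R).PosDef := by
    have hRT : Rᴴ = R := hR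
    simpa only [hRT] using hP.conjTranspose_mul_mul_same (mulVec_injective_iff_isUnit.2 hRu)
  have hdet : (S * P).det = (R * P * R).det := by
    rw [← hRR, det_mul, det_mul, det_mul, det_mul]
    ring
  have htrace : (S * P).trace = (R * P * R).trace := by
    rw [← hRR, trace_mul_comm (R * P), ← mul_assoc]
  have hconj (t : ℝ) : R * (t • S⁻¹) * R = t • 1 := by
    rw [← hRR, mul_inv_rev, mul_smul_comm, smul_mul_assoc, ← mul_assoc,
      mul_nonsing_inv _ ((isUnit_iff_isUnit_det R).1 hRu), one_mul,
      nonsing_inv_mul _ ((isUnit_iff_isUnit_det R).1 hRu)]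
  rw [hdet, htrace] at h
  obtain ⟨hlo, hhi⟩ := hM.mem_Icc_of_le_log_det_sub_trace h
  rw [← hconj, hR.conjugate_le_conjugate_iff hRu] at hlo hhi
  exact ⟨hlo, hhi⟩

theorem isCompact_setOf_posDef_le_log_det_mul_sub_trace {S : Matrix n n ℝ} (hS : S.PosDef)
    (c : ℝ) : IsCompact {P : Matrix n n ℝ | P.PosDef ∧
      c ≤ Real.log (S * P).det - (S * P).trace + Fintype.card n} := by
  set I := Set.Icc (Real.exp (c - 1) • S⁻¹) ((2 * (1 - c)) • S⁻¹)
  set f := fun P : Matrix n n ℝ => Real.log (S * P).det - (S * P).trace + Fintype.card n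
  have hI {P} (hP : P ∈ I) : P.PosDef := by
    rw [← add_sub_cancel (Real.exp (c - 1) • S⁻¹) P]
    exact (hS.inv.smul (Real.exp_pos _)).add_posSemidef hP.1
  have hf : ContinuousOn f I := by
    refine ((ContinuousOn.log (by fun_prop) fun P hP => ?_).sub (by fun_prop)).add
      continuousOn_const
    rw [det_mul]
    exact (mul_pos hS.det_pos (hI hP).det_pos).ne'
  have hset : {P | P.PosDef ∧ c ≤ f P} = I ∩ f ⁻¹' Set.Ici c :=
    Set.ext fun P => ⟨fun ⟨hP, h⟩ => ⟨hS.mem_Icc_of_le_log_det_mul_sub_trace hP h, h⟩,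
      fun ⟨hPI, h⟩ => ⟨hI hPI, h⟩⟩
  rw [hset]
  exact isCompact_Icc.of_isClosed_subset
    (hf.preimage_isClosed_of_isClosed isClosed_Icc isClosed_Ici) Set.inter_subset_left

end Matrix

theorem superlevel_set_compact {p : ℕ} (S : Matrix (Fin p) (Fin p) ℝ)
    (hS : S.PosDef) (c : ℝ) :
    IsCompact {Sig : Matrix (Fin p) (Fin p) ℝ | Sig.PosDef ∧
      c ≤ Real.log (S * Sig⁻¹).det - (S * Sig⁻¹).trace + p} := by
  have hcompact := isCompact_setOf_posDef_le_log_det_mul_sub_trace hS c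
  rw [Fintype.card_fin] at hcompact
  have himage : {Sig : Matrix (Fin p) (Fin p) ℝ | Sig.PosDef ∧
      c ≤ Real.log (S * Sig⁻¹).det - (S * Sig⁻¹).trace + p} =
      Inv.inv '' {P | P.PosDef ∧ c ≤ Real.log (S * P).det - (S * P).trace + p} := by
    ext Sig
    constructor
    · rintro ⟨hSig, h⟩
      exact ⟨Sig⁻¹, ⟨hSig.inv, h⟩, nonsing_inv_nonsing_inv _ hSig.det_pos.ne'.isUnit⟩
    · rintro ⟨P, ⟨hP, h⟩, rfl⟩
      refine ⟨hP.inv, ?_⟩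
      rwa [nonsing_inv_nonsing_inv _ hP.det_pos.ne'.isUnit]
  rw [himage]
  exact hcompact.image_of_continuousOn fun P hP => (continuousAt_matrix_inv P
    (NormedRing.inverse_continuousAt hP.1.det_pos.ne'.isUnit.unit)).continuousWithinAt
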